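/- arXiv:1103.1227 — 3 statements merged into one kernel-verified Lean document; each statement's English description precedes it below -/
import Mathlib

section
/- Let h > 0 and let p be a real polynomial of degree at most 4. Then for every real t, ∫_{t − h/2}^{t + h/2} p(s) ds = h · ((6463/5760) p(t) − (523/1440) p(t − h) + (383/960) p(t − 2h) − (283/1440) p(t − 3h) + (223/5760) p(t − 4h)). (This is the m = 4 quadrature formula, exact on polynomials of degree ≤ 4.) -/
open Polynomial

/-- The `m = 4` LIL quadrature rule is exact on real polynomials of degree at most 4. -/
theorem lil_quadrature_m4 (h : ℝ) (hh : 0 < h) (p : Polynomial ℝ)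
    (hp : p.degree ≤ 4) (t : ℝ) :
    ∫ s in (t - h / 2)..(t + h / 2), p.eval s
      = h * ((6463 / 5760) * p.eval t - (523 / 1440) * p.eval (t - h)
          + (383 / 960) * p.eval (t - 2 * h) - (283 / 1440) * p.eval (t - 3 * h)
          + (223 / 5760) * p.eval (t - 4 * h)) := by
  have hn : p.natDegree < 5 :=
    Nat.lt_succ_of_le (Polynomial.natDegree_le_iff_degree_le.mpr hp)
  have he : ∀ s : ℝ, p.eval s = ∑ i ∈ Finset.range 5, p.coeff i * s ^ i := fun s =>
    Polynomial.eval_eq_sum_range' hn s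
  simp_rw [he]
  rw [intervalIntegral.integral_finset_sum]
  · simp_rw [intervalIntegral.integral_const_mul, integral_pow]
    simp [Finset.sum_range_succ]
    ring
  · intro i _
    exact ((continuous_pow i).intervalIntegrable _ _).const_mul _
end

section
/- Let h > 0 and let p be a real polynomial of degree at most 5. Then for every real t, ∫_{t − h/2}^{t + h/2} p(s) ds = h · ((741/640) p(t) − (1561/2880) p(t − h) + (2179/2880) p(t − 2h) − (133/240) p(t − 3h) + (1253/5760) p(t − 4h) − (103/2880) p(t − 5h)). (This is the m = 5 quadrature formula, exact on polynomials of degree ≤ 5.) -/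
open Polynomial

/-- The `m = 5` LIL quadrature rule is exact on real polynomials of degree at most 5. -/
theorem lil_quadrature_m5 (h : ℝ) (hh : 0 < h) (p : Polynomial ℝ)
    (hp : p.degree ≤ 5) (t : ℝ) :
    ∫ s in (t - h / 2)..(t + h / 2), p.eval s
      = h * ((741 / 640) * p.eval t - (1561 / 2880) * p.eval (t - h)
          + (2179 / 2880) * p.eval (t - 2 * h) - (133 / 240) * p.eval (t - 3 * h)
          + (1253 / 5760) * p.eval (t - 4 * h) - (103 / 2880) * p.eval (t - 5 * h)) := by
  have hnd : p.natDegree < 6 := by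
    have h5 : p.natDegree ≤ 5 := Polynomial.natDegree_le_iff_degree_le.mpr (by exact_mod_cast hp)
    omega
  have key : ∀ x : ℝ, p.eval x = ∑ i ∈ Finset.range 6, p.coeff i * x ^ i := fun x =>
    Polynomial.eval_eq_sum_range' hnd x
  have hint : (∫ s in (t - h / 2)..(t + h / 2), p.eval s)
      = ∑ i ∈ Finset.range 6, p.coeff i *
        (((t + h / 2) ^ (i + 1) - (t - h / 2) ^ (i + 1)) / (i + 1)) := by
    simp_rw [key]
    rw [intervalIntegral.integral_finset_sum]
    · refine Finset.sum_congr rfl fun i _ => ?_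
      rw [intervalIntegral.integral_const_mul, integral_pow]
    · intro i _
      exact (continuous_const.mul (continuous_pow i)).intervalIntegrable _ _
  rw [hint]
  simp only [key, Finset.sum_range_succ, Finset.sum_range_zero]
  push_cast
  ring
end

section
/- The polynomial α_2(s) = (3/2)s² − 2s + 1/2 factors as α_2(s) = (1/2)(s − 1)(3s − 1); its roots are exactly 1 and 1/3, so all roots have modulus at most 1 and the unique root of modulus 1 is simple. Hence the 2-step LIL method satisfies the Dahlquist root condition (zero-stability). -/
open Polynomial

/-- First characteristic polynomial of the 2-step LIL method, over `ℂ`. -/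
noncomputable def lilAlpha2 : Polynomial ℂ :=
  C (3 / 2) * X ^ 2 - C 2 * X + C (1 / 2)

theorem Polynomial.rootMultiplicity_mul_X_sub_C_of_not_isRoot {R : Type*} [CommRing R]
    {q : R[X]} {a : R} (hq : ¬q.IsRoot a) : (q * (X - C a)).rootMultiplicity a = 1 := by
  have hq0 : q ≠ 0 := by
    rintro rfl
    exact hq (eval_zero (x := a))
  simpa [rootMultiplicity_eq_zero hq] using rootMultiplicity_mul_X_sub_C_pow (a := a) (n := 1) hq0

theorem lilAlpha2_eq_factored : lilAlpha2 = C (1 / 2) * (X - C 1) * (C 3 * X - C 1) :=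
  Polynomial.funext fun z => by
    simp only [lilAlpha2, eval_add, eval_sub, eval_mul, eval_pow, eval_C, eval_X]
    ring

theorem lilAlpha2_eval_eq_zero_iff (z : ℂ) : lilAlpha2.eval z = 0 ↔ z = 1 ∨ z = 1 / 3 := by
  rw [lilAlpha2_eq_factored]
  simp only [eval_mul, eval_sub, eval_C, eval_X, mul_eq_zero, sub_eq_zero]
  constructor
  · rintro ((h | h) | h)
    · norm_num at h
    · exact .inl h
    · exact .inr (by linear_combination h / 3)
  · rintro (rfl | rfl)
    · exact .inl (.inr rfl)
    · exact .inr (by norm_num)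

theorem lilAlpha2_rootMultiplicity_one : lilAlpha2.rootMultiplicity 1 = 1 := by
  have hfac : lilAlpha2 = C (1 / 2) * (C 3 * X - C 1) * (X - C 1) := by
    rw [lilAlpha2_eq_factored]
    ring
  rw [hfac]
  refine rootMultiplicity_mul_X_sub_C_of_not_isRoot ?_
  simp only [IsRoot, eval_mul, eval_sub, eval_C, eval_X]
  norm_num

/-- `α₂(s) = (3/2)s² − 2s + 1/2` factors as `(1/2)(s − 1)(3s − 1)`; its roots are
exactly `1` and `1/3`, so every root has modulus at most `1` and the unique root
of modulus `1` is simple: the 2-step LIL method satisfies the Dahlquist root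
condition (zero-stability). -/
theorem lil_root_condition_m2 :
    lilAlpha2 = C (1 / 2) * (X - C 1) * (C 3 * X - C 1) ∧
    (∀ z : ℂ, lilAlpha2.eval z = 0 ↔ z = 1 ∨ z = 1 / 3) ∧
    (∀ z : ℂ, lilAlpha2.eval z = 0 → ‖z‖ ≤ 1) ∧
    (∀ z : ℂ, lilAlpha2.eval z = 0 → ‖z‖ = 1 →
      lilAlpha2.rootMultiplicity z = 1) := by
  refine ⟨lilAlpha2_eq_factored, lilAlpha2_eval_eq_zero_iff, fun z hz => ?_, fun z hz hnorm => ?_⟩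
  · rcases (lilAlpha2_eval_eq_zero_iff z).1 hz with rfl | rfl <;> norm_num
  · rcases (lilAlpha2_eval_eq_zero_iff z).1 hz with rfl | rfl
    · exact lilAlpha2_rootMultiplicity_one
    · norm_num at hnorm
end
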